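/- Let k ≥ 2 and n ≥ k. Every directed (k−1)-tree D on n vertices is Dₖ-saturated and has exactly C(n−k+1, 2) + (k−1)(2n−k) arcs, where C(·,·) denotes the binomial coefficient. -/

import Mathlib

/-!
The arcs of a directed `m`-tree present in both directions form an undirected `m`-tree: each new
vertex `v` is joined both ways to an `m`-clique `K` and one way, always in the same direction, to
every other earlier vertex.

No subdigraph is `(m+1)`-strong: if it contains the last vertex `v`, deleting `K` leaves `v`
without in-arcs or without out-arcs.

Saturation: a missing arc joins some `v` to an earlier vertex `u ∉ K`, and adding it makes `v`
adjacent both ways to the `m + 1` vertices of `K ∪ {u}`. In the undirected `m`-tree the cliques on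
the path from `K` to `{u}` cover a set `W` (`IsAnchored`) that stays connected when fewer than `m`
vertices are deleted and in which, after deleting `m` vertices, every survivor is still joined to a
survivor of `K ∪ {u}`. Hence `W ∪ {v}` induces an `(m+1)`-strong subdigraph.

Arc count: the initial clique has `m(m-1)` arcs, and a vertex added to a tree on `m + j` vertices
brings `2m + j` more.
-/

/-- A finite strict digraph: a finite vertex set and a finite set of arcs
(ordered pairs), with no loops, and all arc endpoints in the vertex set. -/
structure Dgraph where
  verts : Finset ℕ
  arcs : Finset (ℕ × ℕ)
  arcs_mem : ∀ e ∈ arcs, e.1 ∈ verts ∧ e.2 ∈ verts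
  no_loops : ∀ e ∈ arcs, e.1 ≠ e.2

namespace Dgraph

/-- `H` is a subdigraph of `D`. -/
def IsSubdigraph (H D : Dgraph) : Prop := H.verts ⊆ D.verts ∧ H.arcs ⊆ D.arcs

/-- Reachability by a directed path. -/
def Reach (D : Dgraph) (u v : ℕ) : Prop :=
  Relation.ReflTransGen (fun a b => (a, b) ∈ D.arcs) u v

/-- `D` is strongly connected. -/
def StronglyConnected (D : Dgraph) : Prop :=
  ∀ u ∈ D.verts, ∀ v ∈ D.verts, D.Reach u v

/-- Deletion of a set of vertices. -/
def delete (D : Dgraph) (S : Finset ℕ) : Dgraph where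
  verts := D.verts \ S
  arcs := D.arcs.filter (fun e => e.1 ∉ S ∧ e.2 ∉ S)
  arcs_mem := by
    intro e he
    simp only [Finset.mem_filter] at he
    have h := D.arcs_mem e he.1
    simp only [Finset.mem_sdiff]
    exact ⟨⟨h.1, he.2.1⟩, ⟨h.2, he.2.2⟩⟩
  no_loops := fun e he => D.no_loops e (Finset.mem_filter.mp he).1

/-- The subdigraph induced by a set of vertices. -/
def induce (D : Dgraph) (S : Finset ℕ) : Dgraph where
  verts := D.verts ∩ S
  arcs := D.arcs.filter (fun e => e.1 ∈ S ∧ e.2 ∈ S)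
  arcs_mem := by
    intro e he
    simp only [Finset.mem_filter] at he
    have h := D.arcs_mem e he.1
    simp only [Finset.mem_inter]
    exact ⟨⟨h.1, he.2.1⟩, ⟨h.2, he.2.2⟩⟩
  no_loops := fun e he => D.no_loops e (Finset.mem_filter.mp he).1

/-- The complete digraph on a vertex set `S`. -/
def completeOn (S : Finset ℕ) : Dgraph where
  verts := S
  arcs := (S ×ˢ S).filter (fun e => e.1 ≠ e.2)
  arcs_mem := by
    intro e he
    simp only [Finset.mem_filter, Finset.mem_product] at he
    exact ⟨he.1.1, he.1.2⟩
  no_loops := fun e he => (Finset.mem_filter.mp he).2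

/-- Adding the arc `(u, v)` (when this is a legal new arc). -/
def addArc (D : Dgraph) (u v : ℕ) : Dgraph where
  verts := D.verts
  arcs := if u ∈ D.verts ∧ v ∈ D.verts ∧ u ≠ v then insert (u, v) D.arcs else D.arcs
  arcs_mem := by
    intro e he
    split at he
    · rcases Finset.mem_insert.mp he with h | h
      · subst h; exact ⟨by tauto, by tauto⟩
      · exact D.arcs_mem e h
    · exact D.arcs_mem e he
  no_loops := by
    intro e he
    split at he
    · rcases Finset.mem_insert.mp he with h | h
      · subst h; tauto
      · exact D.no_loops e h
    · exact D.no_loops e he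

/-- `D` is `k`-strongly connected: it has at least `k+1` vertices and removing
any fewer than `k` vertices leaves a strongly connected digraph. -/
def KStrong (D : Dgraph) (k : ℕ) : Prop :=
  k + 1 ≤ D.verts.card ∧
    ∀ S : Finset ℕ, S.card < k → StronglyConnected (D.delete S)

/-- `(u, v)` is an arc of the complement of `D`. -/
def MissingArc (D : Dgraph) (u v : ℕ) : Prop :=
  u ∈ D.verts ∧ v ∈ D.verts ∧ u ≠ v ∧ (u, v) ∉ D.arcs

/-- `D` is `𝒟ₖ`-saturated: it has no `k`-strongly connected subdigraph, but
adding any missing arc creates one. -/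
def DSaturated (D : Dgraph) (k : ℕ) : Prop :=
  (∀ H : Dgraph, H.IsSubdigraph D → ¬ H.KStrong k) ∧
    ∀ u v : ℕ, D.MissingArc u v →
      ∃ H : Dgraph, H.IsSubdigraph (D.addArc u v) ∧ H.KStrong k

/-- `S` is a separator of `D`. -/
def IsSeparator (D : Dgraph) (S : Finset ℕ) : Prop :=
  S ⊆ D.verts ∧
    (¬ StronglyConnected (D.delete S) ∨ (D.delete S).verts.card ≤ 1)

/-- `S` is a minimum separator of `D`. -/
def IsMinSeparator (D : Dgraph) (S : Finset ℕ) : Prop :=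
  D.IsSeparator S ∧ ∀ T : Finset ℕ, D.IsSeparator T → S.card ≤ T.card

/-- `B` is the vertex set of a strong component of `D`: a maximal set of
vertices inducing a strongly connected subdigraph. -/
def IsStrongComponent (D : Dgraph) (B : Finset ℕ) : Prop :=
  B ⊆ D.verts ∧ B.Nonempty ∧ StronglyConnected (D.induce B) ∧
    ∀ B' : Finset ℕ, B ⊆ B' → B' ⊆ D.verts →
      StronglyConnected (D.induce B') → B' = B

/-- The reciprocal-degree of `v` in `D`. -/
def recipDeg (D : Dgraph) (v : ℕ) : ℕ :=
  (D.verts.filter (fun w => (v, w) ∈ D.arcs ∧ (w, v) ∈ D.arcs)).card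

/-- Extend `D` by a new vertex `v`: bidirectional arcs to every vertex of `K`,
and unidirectional arcs (all out of `v` if `out`, else all into `v`) to every
other vertex of `D`. -/
def extend (D : Dgraph) (v : ℕ) (K : Finset ℕ) (out : Bool) : Dgraph where
  verts := insert v D.verts
  arcs := D.arcs
    ∪ ((K ∩ D.verts).filter (· ≠ v)).image (fun w => (w, v))
    ∪ ((K ∩ D.verts).filter (· ≠ v)).image (fun w => (v, w))
    ∪ (if out then ((D.verts \ K).filter (· ≠ v)).image (fun w => (v, w))
        else ((D.verts \ K).filter (· ≠ v)).image (fun w => (w, v)))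
  arcs_mem := by
    intro e he
    rcases Finset.mem_union.mp he with h | h
    · rcases Finset.mem_union.mp h with h | h
      · rcases Finset.mem_union.mp h with h | h
        · have h2 := D.arcs_mem e h
          exact ⟨Finset.mem_insert_of_mem h2.1, Finset.mem_insert_of_mem h2.2⟩
        · obtain ⟨w, hw, rfl⟩ := Finset.mem_image.mp h
          have hwD := (Finset.mem_inter.mp (Finset.mem_filter.mp hw).1).2
          exact ⟨Finset.mem_insert_of_mem hwD, Finset.mem_insert_self _ _⟩
      · obtain ⟨w, hw, rfl⟩ := Finset.mem_image.mp h
        have hwD := (Finset.mem_inter.mp (Finset.mem_filter.mp hw).1).2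
        exact ⟨Finset.mem_insert_self _ _, Finset.mem_insert_of_mem hwD⟩
    · cases out with
      | true =>
        simp only [if_true] at h
        obtain ⟨w, hw, rfl⟩ := Finset.mem_image.mp h
        have hwD := (Finset.mem_sdiff.mp (Finset.mem_filter.mp hw).1).1
        exact ⟨Finset.mem_insert_self _ _, Finset.mem_insert_of_mem hwD⟩
      | false =>
        simp only [Bool.false_eq_true, if_false] at h
        obtain ⟨w, hw, rfl⟩ := Finset.mem_image.mp h
        have hwD := (Finset.mem_sdiff.mp (Finset.mem_filter.mp hw).1).1
        exact ⟨Finset.mem_insert_of_mem hwD, Finset.mem_insert_self _ _⟩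
  no_loops := by
    intro e he
    rcases Finset.mem_union.mp he with h | h
    · rcases Finset.mem_union.mp h with h | h
      · rcases Finset.mem_union.mp h with h | h
        · exact D.no_loops e h
        · obtain ⟨w, hw, rfl⟩ := Finset.mem_image.mp h
          exact (Finset.mem_filter.mp hw).2
      · obtain ⟨w, hw, rfl⟩ := Finset.mem_image.mp h
        exact fun hvw => (Finset.mem_filter.mp hw).2 hvw.symm
    · cases out with
      | true =>
        simp only [if_true] at h
        obtain ⟨w, hw, rfl⟩ := Finset.mem_image.mp h
        exact fun hvw => (Finset.mem_filter.mp hw).2 hvw.symm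
      | false =>
        simp only [Bool.false_eq_true, if_false] at h
        obtain ⟨w, hw, rfl⟩ := Finset.mem_image.mp h
        exact (Finset.mem_filter.mp hw).2

/-- The recursively defined family of directed `m`-trees. -/
inductive IsDTree (m : ℕ) : Dgraph → Prop
  | base (S : Finset ℕ) (h : S.card = m) : IsDTree m (completeOn S)
  | grow (D : Dgraph) (hD : IsDTree m D) (v : ℕ) (hv : v ∉ D.verts)
      (K : Finset ℕ) (hK : K ⊆ D.verts) (hKcard : K.card = m)
      (hKcomplete : (completeOn K).IsSubdigraph D) (out : Bool) :
      IsDTree m (D.extend v K out)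

/-- `D` is a tournament: exactly one arc between any two distinct vertices. -/
def IsTournament (D : Dgraph) : Prop :=
  ∀ u ∈ D.verts, ∀ v ∈ D.verts, u ≠ v → ((u, v) ∈ D.arcs ↔ (v, u) ∉ D.arcs)

/-- `D` is acyclic: it has no directed cycle. -/
def Acyclic (D : Dgraph) : Prop :=
  ∀ v : ℕ, ¬ Relation.TransGen (fun a b => (a, b) ∈ D.arcs) v v

end Dgraph

namespace Finset

variable {α : Type*} [DecidableEq α] {S A B W : Finset α}

theorem exists_mem_notMem_of_card_inter_lt (h : (S ∩ A).card < A.card) :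
    ∃ a ∈ A, a ∉ S := by
  obtain ⟨a, ha, haS⟩ := exists_mem_notMem_of_card_lt_card h
  exact ⟨a, ha, fun h => haS (mem_inter.2 ⟨h, ha⟩)⟩

theorem card_inter_le_card_inter_of_subset (h : A ⊆ B) : (S ∩ A).card ≤ (S ∩ B).card :=
  card_le_card (inter_subset_inter_left h)

theorem card_inter_lt_of_card_inter_insert_le {v : α} {m : ℕ} (hvS : v ∈ S) (hvW : v ∉ W)
    (h : (S ∩ insert v W).card ≤ m) : (S ∩ W).card < m := by
  rw [inter_insert_of_mem hvS, card_insert_of_notMem (by simp [hvW])] at h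
  omega

end Finset

open Finset

namespace Dgraph

theorem IsSubdigraph.trans {A B C : Dgraph} (h₁ : A.IsSubdigraph B) (h₂ : B.IsSubdigraph C) :
    A.IsSubdigraph C :=
  ⟨h₁.1.trans h₂.1, h₁.2.trans h₂.2⟩

theorem induce_isSubdigraph (D : Dgraph) (S : Finset ℕ) : (D.induce S).IsSubdigraph D :=
  ⟨inter_subset_left, filter_subset _ _⟩

theorem mem_completeOn_arcs {S : Finset ℕ} {a b : ℕ} :
    (a, b) ∈ (completeOn S).arcs ↔ a ∈ S ∧ b ∈ S ∧ a ≠ b := by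
  simp [completeOn, and_assoc]

theorem completeOn_isSubdigraph_iff {S : Finset ℕ} {D : Dgraph} :
    (completeOn S).IsSubdigraph D ↔
      S ⊆ D.verts ∧ ∀ a ∈ S, ∀ b ∈ S, a ≠ b → (a, b) ∈ D.arcs := by
  refine and_congr Iff.rfl
    ⟨fun h a ha b hb hab => h (mem_completeOn_arcs.2 ⟨ha, hb, hab⟩), ?_⟩
  rintro h ⟨a, b⟩ hab
  obtain ⟨ha, hb, hne⟩ := mem_completeOn_arcs.1 hab
  exact h a ha b hb hne

theorem IsSubdigraph.completeOn_mono {S T : Finset ℕ} {D : Dgraph}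
    (hT : (completeOn T).IsSubdigraph D) (hST : S ⊆ T) : (completeOn S).IsSubdigraph D := by
  rw [completeOn_isSubdigraph_iff] at hT ⊢
  exact ⟨hST.trans hT.1, fun a ha b hb => hT.2 a (hST ha) b (hST hb)⟩

theorem isSubdigraph_addArc (D : Dgraph) (u v : ℕ) : D.IsSubdigraph (D.addArc u v) := by
  refine ⟨subset_rfl, ?_⟩
  unfold addArc
  split_ifs
  exacts [subset_insert _ _, subset_rfl]

theorem MissingArc.mem_addArc {D : Dgraph} {u v : ℕ} (h : D.MissingArc u v) :
    (u, v) ∈ (D.addArc u v).arcs := by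
  simp [addArc, h.1, h.2.1, h.2.2.1]

theorem IsSubdigraph.addArc {D G : Dgraph} (h : D.IsSubdigraph G) (u v : ℕ) :
    (D.addArc u v).IsSubdigraph (G.addArc u v) := by
  refine ⟨h.1, fun e he => ?_⟩
  simp only [Dgraph.addArc] at he ⊢
  by_cases hD : u ∈ D.verts ∧ v ∈ D.verts ∧ u ≠ v
  · rw [if_pos hD] at he
    rw [if_pos ⟨h.1 hD.1, h.1 hD.2.1, hD.2.2⟩]
    exact insert_subset_insert _ h.2 he
  · rw [if_neg hD] at he
    split_ifs
    exacts [subset_insert _ _ (h.2 he), h.2 he]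

section extend

variable {D : Dgraph} {v : ℕ} {K : Finset ℕ} {out : Bool}

theorem mem_extend_arcs (hv : v ∉ D.verts) (hK : K ⊆ D.verts) {a b : ℕ} :
    (a, b) ∈ (D.extend v K out).arcs ↔ (a, b) ∈ D.arcs ∨
      (a = v ∧ b ∈ (if out then D.verts else K)) ∨
        (b = v ∧ a ∈ (if out then K else D.verts)) := by
  cases out <;> grind [extend]

theorem arcs_subset_extend : D.arcs ⊆ (D.extend v K out).arcs := fun _ he =>
  mem_union_left _ (mem_union_left _ (mem_union_left _ he))

theorem isSubdigraph_extend : D.IsSubdigraph (D.extend v K out) :=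
  ⟨subset_insert _ _, arcs_subset_extend⟩

variable (hv : v ∉ D.verts) (hK : K ⊆ D.verts)
include hv hK

theorem extend_biarc_of_mem {w : ℕ} (hw : w ∈ K) :
    (w, v) ∈ (D.extend v K out).arcs ∧ (v, w) ∈ (D.extend v K out).arcs := by
  simp only [mem_extend_arcs hv hK]
  cases out <;> simp [hw, hK hw]

theorem extend_arc_or_arc {w : ℕ} (hw : w ∈ D.verts) :
    (w, v) ∈ (D.extend v K out).arcs ∨ (v, w) ∈ (D.extend v K out).arcs := by
  simp only [mem_extend_arcs hv hK]
  cases out <;> simp [hw]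

theorem mem_or_mem_of_extend_arcs {a b : ℕ} (ha : (a, v) ∈ (D.extend v K out).arcs)
    (hb : (v, b) ∈ (D.extend v K out).arcs) : a ∈ K ∨ b ∈ K := by
  rw [mem_extend_arcs hv hK] at ha hb
  have ha' : (a, v) ∉ D.arcs := fun h => hv (D.arcs_mem _ h).2
  have hb' : (v, b) ∉ D.arcs := fun h => hv (D.arcs_mem _ h).1
  cases out <;> simp_all

theorem mem_arcs_of_mem_extend_arcs {a b : ℕ} (h : (a, b) ∈ (D.extend v K out).arcs)
    (ha : a ≠ v) (hb : b ≠ v) : (a, b) ∈ D.arcs := by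
  rw [mem_extend_arcs hv hK] at h
  simp_all

theorem IsSubdigraph.completeOn_of_extend {Q : Finset ℕ}
    (hQ : (completeOn Q).IsSubdigraph (D.extend v K out)) (hvQ : v ∉ Q) :
    (completeOn Q).IsSubdigraph D := by
  rw [completeOn_isSubdigraph_iff] at hQ ⊢
  refine ⟨fun a ha => (mem_insert.1 (hQ.1 ha)).resolve_left (ne_of_mem_of_not_mem ha hvQ), ?_⟩
  intro a ha b hb hab
  exact mem_arcs_of_mem_extend_arcs hv hK (hQ.2 a ha b hb hab) (ne_of_mem_of_not_mem ha hvQ)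
    (ne_of_mem_of_not_mem hb hvQ)

theorem IsSubdigraph.erase_subset_of_extend {Q : Finset ℕ}
    (hQ : (completeOn Q).IsSubdigraph (D.extend v K out)) (hvQ : v ∈ Q) : Q.erase v ⊆ K := by
  rw [completeOn_isSubdigraph_iff] at hQ
  intro w hw
  obtain ⟨hwv, hwQ⟩ := mem_erase.1 hw
  simpa using mem_or_mem_of_extend_arcs hv hK (hQ.2 w hwQ v hvQ hwv) (hQ.2 v hvQ w hwQ hwv.symm)

theorem completeOn_insert_isSubdigraph_extend (hKc : (completeOn K).IsSubdigraph D) :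
    (completeOn (insert v K)).IsSubdigraph (D.extend v K out) := by
  rw [completeOn_isSubdigraph_iff] at hKc ⊢
  refine ⟨insert_subset_insert _ hK, ?_⟩
  simp only [mem_insert]
  rintro a (rfl | ha) b (rfl | hb) hab
  · exact absurd rfl hab
  · exact (extend_biarc_of_mem hv hK hb).2
  · exact (extend_biarc_of_mem hv hK ha).1
  · exact arcs_subset_extend (hKc.2 a ha b hb hab)

theorem card_extend_arcs :
    (D.extend v K out).arcs.card = D.arcs.card + D.verts.card + K.card := by
  have hvD : ∀ e ∈ D.arcs, e.1 ≠ v ∧ e.2 ≠ v := fun e he =>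
    ⟨ne_of_mem_of_not_mem (D.arcs_mem e he).1 hv, ne_of_mem_of_not_mem (D.arcs_mem e he).2 hv⟩
  have harcs : (D.extend v K out).arcs = D.arcs ∪
      (if out then D.verts else K).image (Prod.mk v) ∪
      (if out then K else D.verts).image (fun w => (w, v)) := by
    ext ⟨a, b⟩
    rw [mem_extend_arcs hv hK]
    simp only [mem_union, mem_image, Prod.mk.injEq]
    grind
  rw [harcs, card_union_of_disjoint, card_union_of_disjoint,
    card_image_of_injective _ (Prod.mk_right_injective v),
    card_image_of_injective _ (Prod.mk_left_injective v)]
  · split_ifs <;> omega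
  all_goals
    simp only [disjoint_left, mem_union, mem_image]
    grind

end extend

def BiReach (D : Dgraph) (U : Finset ℕ) : ℕ → ℕ → Prop :=
  Relation.ReflTransGen fun a b => a ∈ U ∧ b ∈ U ∧ (a, b) ∈ D.arcs ∧ (b, a) ∈ D.arcs

def BiConnected (D : Dgraph) (U : Finset ℕ) : Prop :=
  ∀ x ∈ U, ∀ y ∈ U, D.BiReach U x y

namespace BiReach

variable {D G : Dgraph} {U V : Finset ℕ} {a b c : ℕ}

theorem single (ha : a ∈ U) (hb : b ∈ U) (hab : (a, b) ∈ D.arcs) (hba : (b, a) ∈ D.arcs) :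
    D.BiReach U a b :=
  Relation.ReflTransGen.single ⟨ha, hb, hab, hba⟩

theorem symm (h : D.BiReach U a b) : D.BiReach U b a := by
  induction h with
  | refl => exact .refl
  | tail _ hst ih => exact Relation.ReflTransGen.head ⟨hst.2.1, hst.1, hst.2.2.2, hst.2.2.1⟩ ih

theorem trans (h₁ : D.BiReach U a b) (h₂ : D.BiReach U b c) : D.BiReach U a c :=
  Relation.ReflTransGen.trans h₁ h₂

theorem mono (h : D.BiReach U a b) (hDG : D.arcs ⊆ G.arcs) (hUV : U ⊆ V) : G.BiReach V a b :=
  Relation.ReflTransGen.mono (fun _ _ h => ⟨hUV h.1, hUV h.2.1, hDG h.2.2.1, hDG h.2.2.2⟩) _ _ h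

theorem reach_induce_delete {S T : Finset ℕ} (h : D.BiReach (T \ S) a b) :
    ((D.induce T).delete S).Reach a b := by
  refine Relation.ReflTransGen.mono (fun x y hxy => ?_) _ _ h
  obtain ⟨hx, hy, hxy, -⟩ := hxy
  rw [mem_sdiff] at hx hy
  simp [delete, induce, hxy, hx, hy]

end BiReach

section BiConnected

variable {D G : Dgraph} {U : Finset ℕ}

theorem BiConnected.mono (h : D.BiConnected U) (hDG : D.arcs ⊆ G.arcs) : G.BiConnected U :=
  fun x hx y hy => (h x hx y hy).mono hDG subset_rfl

theorem biConnected_of_completeOn {Q : Finset ℕ} (hQ : (completeOn Q).IsSubdigraph D)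
    (hUQ : U ⊆ Q) : D.BiConnected U := by
  intro x hx y hy
  rcases eq_or_ne x y with rfl | hxy
  · exact .refl
  · exact .single hx hy (hQ.2 (mem_completeOn_arcs.2 ⟨hUQ hx, hUQ hy, hxy⟩))
      (hQ.2 (mem_completeOn_arcs.2 ⟨hUQ hy, hUQ hx, hxy.symm⟩))

theorem biConnected_insert {v : ℕ}
    (h : ∀ x ∈ U, ∃ c ∈ U, D.BiReach U x c ∧ (c, v) ∈ D.arcs ∧ (v, c) ∈ D.arcs) :
    D.BiConnected (insert v U) := by
  have hv : ∀ x ∈ insert v U, D.BiReach (insert v U) x v := by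
    intro x hx
    rcases mem_insert.1 hx with rfl | hx
    · exact .refl
    obtain ⟨c, hc, hxc, hcv, hvc⟩ := h x hx
    exact (hxc.mono subset_rfl (subset_insert _ _)).trans
      (.single (mem_insert_of_mem hc) (mem_insert_self _ _) hcv hvc)
  exact fun x hx y hy => (hv x hx).trans (hv y hy).symm

theorem BiConnected.stronglyConnected_induce_delete {S T : Finset ℕ} (h : D.BiConnected (T \ S)) :
    ((D.induce T).delete S).StronglyConnected := by
  intro x hx y hy
  simp only [delete, induce, mem_sdiff, mem_inter] at hx hy
  exact (h x (mem_sdiff.2 ⟨hx.1.2, hx.2⟩) y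
    (mem_sdiff.2 ⟨hy.1.2, hy.2⟩)).reach_induce_delete

end BiConnected

structure IsAnchored (D : Dgraph) (m : ℕ) (C W : Finset ℕ) : Prop where
  subset_verts : W ⊆ D.verts
  subset : C ⊆ W
  biConnected : ∀ S : Finset ℕ, (S ∩ W).card < m → D.BiConnected (W \ S)
  exists_biReach : ∀ S : Finset ℕ, (S ∩ W).card ≤ m →
    ∀ x ∈ W \ S, ∃ c ∈ C \ S, D.BiReach (W \ S) x c

namespace IsAnchored

variable {D G : Dgraph} {m : ℕ} {C W : Finset ℕ}

theorem mono (h : D.IsAnchored m C W) (hDG : D.IsSubdigraph G) : G.IsAnchored m C W where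
  subset_verts := h.subset_verts.trans hDG.1
  subset := h.subset
  biConnected S hS := (h.biConnected S hS).mono hDG.2
  exists_biReach S hS x hx := by
    obtain ⟨c, hc, hxc⟩ := h.exists_biReach S hS x hx
    exact ⟨c, hc, hxc.mono hDG.2 subset_rfl⟩

theorem of_completeOn {Q : Finset ℕ} (hQ : (completeOn Q).IsSubdigraph D) :
    D.IsAnchored m Q Q where
  subset_verts := hQ.1
  subset := subset_rfl
  biConnected _ _ := biConnected_of_completeOn hQ sdiff_subset
  exists_biReach _ _ x hx := ⟨x, hx, .refl⟩

theorem insert_extend {C₁ K : Finset ℕ} {v : ℕ} (out : Bool) (hW : D.IsAnchored m C₁ W)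
    (hv : v ∉ D.verts) (hK : K ⊆ D.verts) (hKcard : K.card = m) (hKC₁ : K ⊆ C₁)
    (hvC : v ∈ C) (hC₁C : C₁ ⊆ C ∪ K) (hCW : C ⊆ insert v W)
    (hCcard : m + 1 ≤ C.card) :
    (D.extend v K out).IsAnchored m C (insert v W) := by
  have hvW : v ∉ W := fun h => hv (hW.subset_verts h)
  have hKW : K ⊆ W := hKC₁.trans hW.subset
  have hE : (D.extend v K out).IsAnchored m C₁ W := hW.mono isSubdigraph_extend
  refine ⟨insert_subset_insert _ hW.subset_verts, hCW, fun S hS => ?_, fun S hS => ?_⟩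
  · have hSW : (S ∩ W).card < m :=
      (card_inter_le_card_inter_of_subset (subset_insert _ _)).trans_lt hS
    by_cases hvS : v ∈ S
    · rw [insert_sdiff_of_mem _ hvS]
      exact hE.biConnected S hSW
    rw [insert_sdiff_of_notMem _ hvS]
    obtain ⟨j, hjK, hjS⟩ := exists_mem_notMem_of_card_inter_lt
      (S := S) (A := K) (by rw [hKcard]; exact (card_inter_le_card_inter_of_subset
        (hKW.trans (subset_insert _ _))).trans_lt hS)
    have hj : j ∈ W \ S := mem_sdiff.2 ⟨hKW hjK, hjS⟩
    exact biConnected_insert fun x hx =>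
      ⟨j, hj, hE.biConnected S hSW x hx j hj, extend_biarc_of_mem hv hK hjK⟩
  · intro x hx
    by_cases hvS : v ∈ S
    · rw [insert_sdiff_of_mem _ hvS] at hx ⊢
      obtain ⟨c, hcC, hcS⟩ := exists_mem_notMem_of_card_inter_lt (S := S) (A := C)
        (by have := card_inter_le_card_inter_of_subset (S := S) hCW; omega)
      have hc : c ∈ W \ S := mem_sdiff.2
        ⟨(mem_insert.1 (hCW hcC)).resolve_left (ne_of_mem_of_not_mem hvS hcS).symm, hcS⟩
      exact ⟨c, mem_sdiff.2 ⟨hcC, hcS⟩,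
        hE.biConnected S (card_inter_lt_of_card_inter_insert_le hvS hvW hS) x hx c hc⟩
    rw [insert_sdiff_of_notMem _ hvS] at hx ⊢
    have hvC' : v ∈ C \ S := mem_sdiff.2 ⟨hvC, hvS⟩
    rcases mem_insert.1 hx with rfl | hx
    · exact ⟨x, hvC', .refl⟩
    obtain ⟨c, hc, hxc⟩ := hE.exists_biReach S
      ((card_inter_le_card_inter_of_subset (subset_insert _ _)).trans hS) x hx
    have hxc' := hxc.mono subset_rfl (subset_insert v _)
    obtain ⟨hc₁, hcS⟩ := mem_sdiff.1 hc
    rcases mem_union.1 (hC₁C hc₁) with hcC | hcK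
    · exact ⟨c, mem_sdiff.2 ⟨hcC, hcS⟩, hxc'⟩
    obtain ⟨hcv, hvc⟩ := extend_biarc_of_mem (out := out) hv hK hcK
    exact ⟨v, hvC', hxc'.trans (.single (mem_insert_of_mem (mem_sdiff.2
      ⟨hKW hcK, hcS⟩)) (mem_insert_self _ _) hcv hvc)⟩

theorem kStrong_induce_insert {v : ℕ} (hW : G.IsAnchored m C W) (hv : v ∈ G.verts)
    (hvW : v ∉ W) (hCcard : m + 1 ≤ C.card) (hvC : ∀ c ∈ C, (c, v) ∈ G.arcs ∧ (v, c) ∈ G.arcs) :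
    (G.induce (insert v W)).KStrong (m + 1) := by
  refine ⟨?_, fun S hS => BiConnected.stronglyConnected_induce_delete ?_⟩
  · have hverts : (G.induce (insert v W)).verts = insert v W :=
      inter_eq_right.2 (insert_subset hv hW.subset_verts)
    rw [hverts, card_insert_of_notMem hvW]
    have := card_le_card hW.subset
    omega
  have hSm : (S ∩ insert v W).card ≤ m :=
    (card_le_card inter_subset_left).trans (by omega)
  by_cases hvS : v ∈ S
  · rw [insert_sdiff_of_mem _ hvS]
    exact hW.biConnected S (card_inter_lt_of_card_inter_insert_le hvS hvW hSm)
  rw [insert_sdiff_of_notMem _ hvS]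
  refine biConnected_insert fun x hx => ?_
  obtain ⟨c, hc, hxc⟩ := hW.exists_biReach S
    ((card_inter_le_card_inter_of_subset (subset_insert _ _)).trans hSm) x hx
  obtain ⟨hcC, hcS⟩ := mem_sdiff.1 hc
  exact ⟨c, mem_sdiff.2 ⟨hW.subset hcC, hcS⟩, hxc, hvC c hcC⟩

end IsAnchored

theorem IsDTree.exists_isAnchored {m : ℕ} {D : Dgraph} (hD : IsDTree m D) {K R : Finset ℕ}
    (hKcard : K.card = m) (hK : (completeOn K).IsSubdigraph D)
    (hR : (completeOn R).IsSubdigraph D) (hRK : ¬ R ⊆ K) :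
    ∃ W, D.IsAnchored m (K ∪ R) W := by
  induction hD generalizing K R with
  | base S hS =>
    have hKS : K = S := eq_of_subset_of_card_le hK.1 (by rw [hS, hKcard])
    exact absurd (hKS ▸ hR.1) hRK
  | grow D _ v hv K₀ hK₀ hK₀card hK₀c out ih =>
    have hcard : m + 1 ≤ (K ∪ R).card := by
      rw [← hKcard]
      exact card_lt_card ⟨subset_union_left, fun h => hRK (union_subset_iff.1 h).2⟩
    by_cases hvKR : v ∉ K ∧ v ∉ R
    · obtain ⟨W, hW⟩ := ih hKcard (hK.completeOn_of_extend hv hK₀ hvKR.1)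
        (hR.completeOn_of_extend hv hK₀ hvKR.2) hRK
      exact ⟨W, hW.mono isSubdigraph_extend⟩
    by_cases hsub : K ∪ R ⊆ insert v K₀
    · exact ⟨K ∪ R, .of_completeOn
        ((completeOn_insert_isSubdigraph_extend hv hK₀ hK₀c).completeOn_mono hsub)⟩
    -- Now `v` lies in `K` or in `R`; the clique containing it is traded for `K₀`.
    by_cases hvK : v ∈ K
    · have hKK₀ : K ⊆ insert v K₀ :=
        subset_insert_iff.2 (hK.erase_subset_of_extend hv hK₀ hvK)
      have hRK₀ : ¬ R.erase v ⊆ K₀ := fun h =>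
        hsub (union_subset hKK₀ (subset_insert_iff.2 h))
      obtain ⟨W, hW⟩ := ih hK₀card hK₀c
        ((hR.completeOn_mono (erase_subset _ _)).completeOn_of_extend hv hK₀ (by simp)) hRK₀
      refine ⟨insert v W, hW.insert_extend out hv hK₀ hK₀card subset_union_left
        (mem_union_left _ hvK) ?_ ?_ hcard⟩
      · exact union_subset subset_union_right
          ((erase_subset _ _).trans (subset_union_right.trans subset_union_left))
      · exact union_subset
          (hKK₀.trans (insert_subset_insert _ (subset_union_left.trans hW.subset)))
          (subset_insert_iff.2 (subset_union_right.trans hW.subset))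
    · have hvR : v ∈ R := by tauto
      have hRK₀ : R ⊆ insert v K₀ :=
        subset_insert_iff.2 (hR.erase_subset_of_extend hv hK₀ hvR)
      have hK₀K : ¬ K₀ ⊆ K := fun h => hsub <| by
        rw [← eq_of_subset_of_card_le h (by rw [hKcard, hK₀card])]
        exact union_subset (subset_insert _ _) hRK₀
      obtain ⟨W, hW⟩ := ih hKcard (hK.completeOn_of_extend hv hK₀ hvK) hK₀c hK₀K
      refine ⟨insert v W, hW.insert_extend out hv hK₀ hK₀card subset_union_right
        (mem_union_right _ hvR) ?_ ?_ hcard⟩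
      · exact union_subset (subset_union_left.trans subset_union_left)
          subset_union_right
      · exact union_subset
          ((subset_union_left.trans hW.subset).trans (subset_insert _ _))
          (hRK₀.trans (insert_subset_insert _ (subset_union_right.trans hW.subset)))

theorem Reach.exists_arc_into {D : Dgraph} {a b : ℕ} (h : D.Reach a b) (hab : a ≠ b) :
    ∃ c, (c, b) ∈ D.arcs := by
  rcases h.cases_tail with rfl | ⟨c, -, hc⟩
  exacts [absurd rfl hab, ⟨c, hc⟩]

theorem Reach.exists_arc_out_of {D : Dgraph} {a b : ℕ} (h : D.Reach a b) (hab : a ≠ b) :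
    ∃ c, (a, c) ∈ D.arcs := by
  rcases h.cases_head with rfl | ⟨c, hc, -⟩
  exacts [absurd rfl hab, ⟨c, hc⟩]

theorem IsDTree.not_kStrong {m : ℕ} {D H : Dgraph} (hD : IsDTree m D) (hH : H.IsSubdigraph D) :
    ¬ H.KStrong (m + 1) := by
  induction hD generalizing H with
  | base S hS =>
    intro hHs
    have hHcard := hHs.1
    have hHS : H.verts.card ≤ S.card := card_le_card hH.1
    omega
  | grow D _ v hv K hK hKcard _ out ih =>
    by_cases hvH : v ∈ H.verts
    · intro hHs
      have hvK : v ∉ K := fun h => hv (hK h)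
      have hHcard := hHs.1
      have hSC := hHs.2 K (by omega)
      have hvH' : v ∈ (H.delete K).verts := mem_sdiff.2 ⟨hvH, hvK⟩
      obtain ⟨w, hw, hwv⟩ := exists_mem_ne (s := (H.delete K).verts)
        (by have := le_card_sdiff K H.verts; simp only [delete]; omega) v
      obtain ⟨c, hc⟩ := (hSC w hw v hvH').exists_arc_into hwv
      obtain ⟨c', hc'⟩ := (hSC v hvH' w hw).exists_arc_out_of hwv.symm
      simp only [delete, mem_filter] at hc hc'
      rcases mem_or_mem_of_extend_arcs hv hK (hH.2 hc.1) (hH.2 hc'.1) with h | h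
      exacts [hc.2.1 h, hc'.2.2 h]
    · refine ih ⟨fun x hx => ?_, fun e he => ?_⟩
      · exact (mem_insert.1 (hH.1 hx)).resolve_left (ne_of_mem_of_not_mem hx hvH)
      · exact mem_arcs_of_mem_extend_arcs hv hK (hH.2 he)
          (ne_of_mem_of_not_mem (H.arcs_mem e he).1 hvH)
          (ne_of_mem_of_not_mem (H.arcs_mem e he).2 hvH)

theorem IsDTree.exists_kStrong_of_extend_biarc {m : ℕ} {D G : Dgraph} (hD : IsDTree m D) {v : ℕ}
    {K : Finset ℕ} {out : Bool} (hv : v ∉ D.verts) (hK : K ⊆ D.verts) (hKcard : K.card = m)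
    (hKc : (completeOn K).IsSubdigraph D) {u : ℕ} (hu : u ∈ D.verts) (huK : u ∉ K)
    (hG : (D.extend v K out).IsSubdigraph G) (huv : (u, v) ∈ G.arcs) (hvu : (v, u) ∈ G.arcs) :
    ∃ H : Dgraph, H.IsSubdigraph G ∧ H.KStrong (m + 1) := by
  obtain ⟨W, hW⟩ := hD.exists_isAnchored (R := {u}) hKcard hKc
    (completeOn_isSubdigraph_iff.2 ⟨by simpa using hu, by simp⟩) (by simpa using huK)
  have hDG : D.IsSubdigraph G := isSubdigraph_extend.trans hG
  refine ⟨G.induce (insert v W), G.induce_isSubdigraph _,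
    (hW.mono hDG).kStrong_induce_insert (hG.1 (mem_insert_self _ _))
      (fun h => hv (hW.subset_verts h)) (by simp [huK, hKcard]) ?_⟩
  simp only [mem_union, mem_singleton]
  rintro c (hc | rfl)
  exacts [⟨hG.2 (extend_biarc_of_mem hv hK hc).1, hG.2 (extend_biarc_of_mem hv hK hc).2⟩,
    ⟨huv, hvu⟩]

theorem IsDTree.exists_kStrong_addArc {m : ℕ} {D : Dgraph} (hD : IsDTree m D) {x y : ℕ}
    (hxy : D.MissingArc x y) :
    ∃ H : Dgraph, H.IsSubdigraph (D.addArc x y) ∧ H.KStrong (m + 1) := by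
  induction hD generalizing x y with
  | base S =>
    obtain ⟨hx, hy, hne, hnot⟩ := hxy
    exact absurd (mem_completeOn_arcs.2 ⟨hx, hy, hne⟩) hnot
  | grow D hD v hv K hK hKcard hKc out ih =>
    have hG := isSubdigraph_addArc (D.extend v K out) x y
    have ⟨hx, hy, hne, hnot⟩ := hxy
    rcases mem_insert.1 hx with rfl | hxD <;> rcases mem_insert.1 hy with rfl | hyD
    · exact absurd rfl hne
    · have huK : y ∉ K := fun h => hnot (extend_biarc_of_mem hv hK h).2
      exact hD.exists_kStrong_of_extend_biarc hv hK hKcard hKc hyD huK hG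
        (hG.2 ((extend_arc_or_arc hv hK hyD).resolve_right hnot)) hxy.mem_addArc
    · have huK : x ∉ K := fun h => hnot (extend_biarc_of_mem hv hK h).1
      exact hD.exists_kStrong_of_extend_biarc hv hK hKcard hKc hxD huK hG hxy.mem_addArc
        (hG.2 ((extend_arc_or_arc hv hK hxD).resolve_left hnot))
    · obtain ⟨H, hH, hHs⟩ := ih ⟨hxD, hyD, hne, fun h => hnot (arcs_subset_extend h)⟩
      exact ⟨H, hH.trans (isSubdigraph_extend.addArc x y), hHs⟩

theorem IsDTree.card_arcs {m : ℕ} {D : Dgraph} (hD : IsDTree m D) :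
    m ≤ D.verts.card ∧
      D.arcs.card = (D.verts.card - m).choose 2 + m * (m - 1 + 2 * (D.verts.card - m)) := by
  induction hD with
  | base S hS =>
    have harcs : (completeOn S).arcs = S.offDiag := by ext ⟨a, b⟩; simp [mem_completeOn_arcs]
    refine ⟨hS.ge, ?_⟩
    rw [harcs, offDiag_card]
    simp [completeOn, hS, Nat.mul_sub_one]
  | grow D _ v hv K hK hKcard _ out ih =>
    obtain ⟨j, hj⟩ := Nat.exists_eq_add_of_le ih.1
    rw [card_extend_arcs hv hK, ih.2, extend, card_insert_of_notMem hv, hj, hKcard, Nat.add_assoc,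
      Nat.add_sub_cancel_left, Nat.add_sub_cancel_left, Nat.choose_succ_succ, Nat.choose_one_right]
    exact ⟨by omega, by ring⟩

theorem IsDTree.dSaturated {m : ℕ} {D : Dgraph} (hD : IsDTree m D) : D.DSaturated (m + 1) :=
  ⟨fun _ hH => hD.not_kStrong hH, fun _ _ hxy => hD.exists_kStrong_addArc hxy⟩

end Dgraph

open Dgraph
theorem stmt10_general (k n : ℕ) (hk : 2 ≤ k)
    (D : Dgraph) (hD : Dgraph.IsDTree (k - 1) D) (hcard : D.verts.card = n) :
    D.DSaturated k ∧
      D.arcs.card = (n - k + 1).choose 2 + (k - 1) * (2 * n - k) := by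
  subst hcard
  obtain ⟨m, rfl⟩ : ∃ m, k = m + 1 := ⟨k - 1, by omega⟩
  rw [Nat.add_sub_cancel] at hD ⊢
  obtain ⟨hmn, harcs⟩ := hD.card_arcs
  refine ⟨hD.dSaturated, ?_⟩
  -- `n - k + 1 = n - m` fails only for `n = m`, where both binomials vanish.
  have hchoose : (D.verts.card - (m + 1) + 1).choose 2 = (D.verts.card - m).choose 2 := by
    rcases hmn.eq_or_lt with h | h
    · simp [← h]
    · congr 1
      omega
  rw [harcs, hchoose]
  congr 2
  omega

/-- Every directed `(k-1)`-tree on `n ≥ k` vertices is `𝒟ₖ`-saturated and has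
exactly `C(n-k+1, 2) + (k-1)(2n-k)` arcs. -/
theorem stmt10 (k n : ℕ) (hk : 2 ≤ k) (hn : k ≤ n)
    (D : Dgraph) (hD : Dgraph.IsDTree (k - 1) D) (hcard : D.verts.card = n) :
    D.DSaturated k ∧
      D.arcs.card = (n - k + 1).choose 2 + (k - 1) * (2 * n - k) :=
  stmt10_general k n hk D hD hcard
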